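/- Let Δ be a real number with 0 < Δ < 1/12, and set θ₊ = (7 + 2Δ + √(25 + 4Δ + 4Δ²))/3 and θ₋ = (7 + 2Δ − √(25 + 4Δ + 4Δ²))/3. Put φ₀ = 1/6 and φ₁ = 1/3. For each integer n ≥ 0 and each tuple m = (m₁,…,m_n) ∈ {0,1}^n define real numbers ã_r(m), b̃_r(m) (0 ≤ r ≤ n) by ã₀ = 1/(1 + 2Δ/3), b̃₀ = 1, and, for 1 ≤ r ≤ n, ã_r = b̃_{r−1} and b̃_r = 3 b̃_{r−1} when m_r = 0, while b̃_r = 2 b̃_{r−1} − ã_{r−1} + Δ(b̃_{r−1} − ã_{r−1}) when m_r = 1. Put B_n = Σ_{m ∈ {0,1}^n} φ_{m₁} φ_{m₂} ⋯ φ_{m_n} b̃_n(m). Then for every integer n ≥ 1 one has 4^n B_n = (θ₊^{n+1} − θ₋^{n+1})/(θ₊ − θ₋) − (θ₊θ₋/(2(1 + 2Δ/3))) · (θ₊^n − θ₋^n)/(θ₊ − θ₋). -/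

import Mathlib

open scoped BigOperators

/-- The pair `(ã_r(m), b̃_r(m))` of Wooley's multigrade iteration: `ã₀ = 1/(1 + 2Δ/3)`,
`b̃₀ = 1`, and for `r ≥ 1`, `ã_r = b̃_{r-1}` and `b̃_r = 3b̃_{r-1}` when `m_r = 0`
(here encoded as `m (r-1) = false`), while
`b̃_r = 2b̃_{r-1} - ã_{r-1} + Δ(b̃_{r-1} - ã_{r-1})` when `m_r = 1`
(encoded as `m (r-1) = true`). -/
noncomputable def seqAB (Δ : ℝ) (m : ℕ → Bool) : ℕ → ℝ × ℝ
  | 0 => (1 / (1 + 2 * Δ / 3), 1)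
  | r + 1 =>
    ((seqAB Δ m r).2,
      if m r then
        2 * (seqAB Δ m r).2 - (seqAB Δ m r).1 + Δ * ((seqAB Δ m r).2 - (seqAB Δ m r).1)
      else 3 * (seqAB Δ m r).2)

/-- `B_n = Σ_{m ∈ {0,1}^n} φ_{m₁} ⋯ φ_{m_n} b̃_n(m)`, where `φ₀ = 1/6` and `φ₁ = 1/3`;
a tuple `m ∈ {0,1}^n` is encoded as `m : Fin n → Bool` with `true` standing for `1`. -/
noncomputable def Bseq (Δ : ℝ) (n : ℕ) : ℝ :=
  ∑ m : Fin n → Bool,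
    (∏ i, if m i then (1 / 3 : ℝ) else 1 / 6) *
      (seqAB Δ (fun r => if h : r < n then m ⟨r, h⟩ else false) n).2

/-!
Averaging the last step of the iteration over `m_{n+1}` gives `A_{n+1} = B_n / 2` and
`B_{n+1} = ((7 + 2Δ)/6) B_n - ((1 + Δ)/3) A_n`, where `A_n` is the weighted sum of the `ã_n(m)`.
Hence `4ⁿ Bₙ` satisfies the linear recurrence with characteristic polynomial `θ² - 𝔞θ + 𝔟`,
and the closed form is its Binet-type solution with the initial values `B₀ = 1` and `B₁`.
-/

section LinearRecurrence

theorem eq_of_two_step_recurrence {R : Type*} [CommRing R] {p q : R} {u v : ℕ → R}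
    (hu : ∀ k, u (k + 2) = p * u (k + 1) - q * u k)
    (hv : ∀ k, v (k + 2) = p * v (k + 1) - q * v k) (h0 : u 0 = v 0) (h1 : u 1 = v 1) :
    u = v := by
  funext k
  induction k using Nat.twoStepInduction with
  | zero => exact h0
  | one => exact h1
  | more k ih₀ ih₁ => rw [hu, hv, ih₀, ih₁]

theorem eq_binet_of_two_step_recurrence {K : Type*} [Field K] {a b : K} (hab : a ≠ b)
    {u : ℕ → K} (hu : ∀ k, u (k + 2) = (a + b) * u (k + 1) - a * b * u k) (k : ℕ) :
    u k = u 0 * ((a ^ (k + 1) - b ^ (k + 1)) / (a - b)) +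
      (u 1 - (a + b) * u 0) * ((a ^ k - b ^ k) / (a - b)) := by
  have hab' : a - b ≠ 0 := sub_ne_zero.mpr hab
  refine congrFun (eq_of_two_step_recurrence (u := u)
    (v := fun k => u 0 * ((a ^ (k + 1) - b ^ (k + 1)) / (a - b)) +
      (u 1 - (a + b) * u 0) * ((a ^ k - b ^ k) / (a - b))) hu (fun k => ?_) ?_ ?_) k
  · ring
  · field_simp; ring
  · field_simp; ring

end LinearRecurrence

theorem Fin.sum_prod_mul_eq_sum_snoc {α R : Type*} [Fintype α] [CommSemiring R] {n : ℕ}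
    (w : α → R) (f : (Fin (n + 1) → α) → R) :
    ∑ m : Fin (n + 1) → α, (∏ i, w (m i)) * f m =
      ∑ m : Fin n → α, (∏ i, w (m i)) * ∑ b, w b * f (Fin.snoc m b) := by
  rw [← (Fin.snocEquiv fun _ => α).sum_comp, Fintype.sum_prod_type_right]
  refine Finset.sum_congr rfl fun m _ => ?_
  rw [Finset.mul_sum]
  refine Finset.sum_congr rfl fun b _ => ?_
  simp only [Fin.snocEquiv, Equiv.coe_fn_mk, Fin.prod_univ_castSucc, Fin.snoc_castSucc,
    Fin.snoc_last]
  ring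

section Iteration

variable (Δ : ℝ)

noncomputable def abStep (b : Bool) (p : ℝ × ℝ) : ℝ × ℝ :=
  (p.2, if b then 2 * p.2 - p.1 + Δ * (p.2 - p.1) else 3 * p.2)

theorem seqAB_succ (m : ℕ → Bool) (r : ℕ) :
    seqAB Δ m (r + 1) = abStep Δ (m r) (seqAB Δ m r) := rfl

theorem seqAB_congr {m m' : ℕ → Bool} {r : ℕ} (h : ∀ i < r, m i = m' i) :
    seqAB Δ m r = seqAB Δ m' r := by
  induction r with
  | zero => rfl
  | succ r ih =>
    rw [seqAB_succ, seqAB_succ, ih fun i hi => h i (by omega), h r (by omega)]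

def padTuple {n : ℕ} (m : Fin n → Bool) (r : ℕ) : Bool :=
  if h : r < n then m ⟨r, h⟩ else false

theorem seqAB_padTuple_snoc {n : ℕ} (m : Fin n → Bool) (b : Bool) :
    seqAB Δ (padTuple (Fin.snoc m b : Fin (n + 1) → Bool)) (n + 1) =
      abStep Δ b (seqAB Δ (padTuple m) n) := by
  have hlast : padTuple (Fin.snoc m b : Fin (n + 1) → Bool) n = b := by
    simp only [padTuple, dif_pos n.lt_succ_self]
    exact Fin.snoc_last (α := fun _ => Bool) ..
  have hinit : ∀ i < n, padTuple (Fin.snoc m b : Fin (n + 1) → Bool) i = padTuple m i := by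
    intro i hi
    simp only [padTuple, dif_pos hi, dif_pos (Nat.lt_succ_of_lt hi)]
    exact Fin.snoc_castSucc (i := ⟨i, hi⟩) ..
  rw [seqAB_succ, hlast, seqAB_congr Δ hinit]

noncomputable def digitWeight (b : Bool) : ℝ := if b then 1 / 3 else 1 / 6

noncomputable def weightedStateSum (n : ℕ) (F : ℝ × ℝ → ℝ) : ℝ :=
  ∑ m : Fin n → Bool, (∏ i, digitWeight (m i)) * F (seqAB Δ (padTuple m) n)

theorem Bseq_eq_weightedStateSum (n : ℕ) : Bseq Δ n = weightedStateSum Δ n Prod.snd := by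
  unfold Bseq weightedStateSum digitWeight padTuple
  rfl

theorem weightedStateSum_linear (n : ℕ) (a b : ℝ) (F G : ℝ × ℝ → ℝ) :
    weightedStateSum Δ n (fun p => a * F p + b * G p) =
      a * weightedStateSum Δ n F + b * weightedStateSum Δ n G := by
  simp only [weightedStateSum, Finset.mul_sum, ← Finset.sum_add_distrib]
  exact Finset.sum_congr rfl fun _ _ => by ring

theorem weightedStateSum_succ (n : ℕ) (F : ℝ × ℝ → ℝ) :
    weightedStateSum Δ (n + 1) F =
      weightedStateSum Δ n
        (fun p => 1 / 3 * F (abStep Δ true p) + 1 / 6 * F (abStep Δ false p)) := by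
  rw [weightedStateSum, Fin.sum_prod_mul_eq_sum_snoc]
  simp only [seqAB_padTuple_snoc, Fintype.sum_bool, digitWeight]
  rfl

theorem weightedStateSum_fst_succ (n : ℕ) :
    weightedStateSum Δ (n + 1) Prod.fst = 1 / 2 * weightedStateSum Δ n Prod.snd := by
  calc weightedStateSum Δ (n + 1) Prod.fst
      = weightedStateSum Δ n (fun p => 1 / 2 * p.2 + 0 * p.1) := by
        rw [weightedStateSum_succ]; congr 1; funext p; simp only [abStep]; ring
    _ = 1 / 2 * weightedStateSum Δ n Prod.snd := by rw [weightedStateSum_linear]; ring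

theorem weightedStateSum_snd_succ (n : ℕ) :
    weightedStateSum Δ (n + 1) Prod.snd =
      (7 + 2 * Δ) / 6 * weightedStateSum Δ n Prod.snd -
        (1 + Δ) / 3 * weightedStateSum Δ n Prod.fst := by
  calc weightedStateSum Δ (n + 1) Prod.snd
      = weightedStateSum Δ n (fun p => (7 + 2 * Δ) / 6 * p.2 + -((1 + Δ) / 3) * p.1) := by
        rw [weightedStateSum_succ]; congr 1; funext p
        simp only [abStep, if_true, Bool.false_eq_true, if_false]; ring
    _ = _ := by rw [weightedStateSum_linear]; ring

theorem Bseq_zero : Bseq Δ 0 = 1 := by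
  simp [Bseq, seqAB]

theorem Bseq_one : Bseq Δ 1 = (7 + 2 * Δ) / 6 - (1 + Δ) / 3 * (1 / (1 + 2 * Δ / 3)) := by
  rw [Bseq_eq_weightedStateSum, weightedStateSum_snd_succ]
  simp [weightedStateSum, seqAB]

theorem Bseq_add_two (n : ℕ) :
    Bseq Δ (n + 2) = (7 + 2 * Δ) / 6 * Bseq Δ (n + 1) - (1 + Δ) / 6 * Bseq Δ n := by
  simp only [Bseq_eq_weightedStateSum, weightedStateSum_snd_succ Δ (n + 1),
    weightedStateSum_fst_succ]
  ring

end Iteration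

theorem Bseq_closed_form_general (Δ : ℝ) (n : ℕ) :
    (4 : ℝ) ^ n * Bseq Δ n =
      ((7 + 2 * Δ + Real.sqrt (25 + 4 * Δ + 4 * Δ ^ 2)) / 3) ^ (n + 1) /
          (((7 + 2 * Δ + Real.sqrt (25 + 4 * Δ + 4 * Δ ^ 2)) / 3) -
            ((7 + 2 * Δ - Real.sqrt (25 + 4 * Δ + 4 * Δ ^ 2)) / 3)) -
        ((7 + 2 * Δ - Real.sqrt (25 + 4 * Δ + 4 * Δ ^ 2)) / 3) ^ (n + 1) /
          (((7 + 2 * Δ + Real.sqrt (25 + 4 * Δ + 4 * Δ ^ 2)) / 3) -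
            ((7 + 2 * Δ - Real.sqrt (25 + 4 * Δ + 4 * Δ ^ 2)) / 3)) -
        (((7 + 2 * Δ + Real.sqrt (25 + 4 * Δ + 4 * Δ ^ 2)) / 3) *
            ((7 + 2 * Δ - Real.sqrt (25 + 4 * Δ + 4 * Δ ^ 2)) / 3) /
              (2 * (1 + 2 * Δ / 3))) *
          ((((7 + 2 * Δ + Real.sqrt (25 + 4 * Δ + 4 * Δ ^ 2)) / 3) ^ n -
              ((7 + 2 * Δ - Real.sqrt (25 + 4 * Δ + 4 * Δ ^ 2)) / 3) ^ n) /
            (((7 + 2 * Δ + Real.sqrt (25 + 4 * Δ + 4 * Δ ^ 2)) / 3) -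
              ((7 + 2 * Δ - Real.sqrt (25 + 4 * Δ + 4 * Δ ^ 2)) / 3))) := by
  have hdisc : 0 < 25 + 4 * Δ + 4 * Δ ^ 2 := by nlinarith [sq_nonneg (2 * Δ + 1)]
  set s := Real.sqrt (25 + 4 * Δ + 4 * Δ ^ 2)
  have hs : s ^ 2 = 25 + 4 * Δ + 4 * Δ ^ 2 := Real.sq_sqrt hdisc.le
  have hs0 : s ≠ 0 := (Real.sqrt_pos.mpr hdisc).ne'
  set θp := (7 + 2 * Δ + s) / 3
  set θm := (7 + 2 * Δ - s) / 3
  have hθ : θp ≠ θm := fun h => hs0 (by simp only [θp, θm] at h; linarith)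
  have hsum : θp + θm = 2 / 3 * (7 + 2 * Δ) := by ring
  have hprod : θp * θm = 8 / 3 * (1 + Δ) := by linear_combination (-1 / 9 : ℝ) * hs
  have hrec : ∀ k, (4 : ℝ) ^ (k + 2) * Bseq Δ (k + 2) =
      (θp + θm) * ((4 : ℝ) ^ (k + 1) * Bseq Δ (k + 1)) - θp * θm * ((4 : ℝ) ^ k * Bseq Δ k) := by
    intro k
    rw [hsum, hprod, Bseq_add_two]
    ring
  have hB1 : (4 : ℝ) ^ 1 * Bseq Δ 1 - (θp + θm) * ((4 : ℝ) ^ 0 * Bseq Δ 0) =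
      -(θp * θm / (2 * (1 + 2 * Δ / 3))) := by
    rw [Bseq_zero, Bseq_one, hsum, hprod, div_mul_eq_div_div_swap]
    ring
  rw [eq_binet_of_two_step_recurrence (u := fun k => (4 : ℝ) ^ k * Bseq Δ k) hθ hrec n, hB1,
    pow_zero, Bseq_zero]
  ring

/-- The closed form for `B_n`: with `θ± = (7 + 2Δ ± √(25 + 4Δ + 4Δ²))/3`, for every
`n ≥ 1` one has
`4ⁿ Bₙ = (θ₊^{n+1} - θ₋^{n+1})/(θ₊ - θ₋) - (θ₊θ₋/(2(1 + 2Δ/3)))·(θ₊ⁿ - θ₋ⁿ)/(θ₊ - θ₋)`. -/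
theorem Bseq_closed_form (Δ : ℝ) (hΔ0 : 0 < Δ) (hΔ : Δ < 1 / 12) (n : ℕ) (hn : 1 ≤ n) :
    (4 : ℝ) ^ n * Bseq Δ n =
      ((7 + 2 * Δ + Real.sqrt (25 + 4 * Δ + 4 * Δ ^ 2)) / 3) ^ (n + 1) /
          (((7 + 2 * Δ + Real.sqrt (25 + 4 * Δ + 4 * Δ ^ 2)) / 3) -
            ((7 + 2 * Δ - Real.sqrt (25 + 4 * Δ + 4 * Δ ^ 2)) / 3)) -
        ((7 + 2 * Δ - Real.sqrt (25 + 4 * Δ + 4 * Δ ^ 2)) / 3) ^ (n + 1) /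
          (((7 + 2 * Δ + Real.sqrt (25 + 4 * Δ + 4 * Δ ^ 2)) / 3) -
            ((7 + 2 * Δ - Real.sqrt (25 + 4 * Δ + 4 * Δ ^ 2)) / 3)) -
        (((7 + 2 * Δ + Real.sqrt (25 + 4 * Δ + 4 * Δ ^ 2)) / 3) *
            ((7 + 2 * Δ - Real.sqrt (25 + 4 * Δ + 4 * Δ ^ 2)) / 3) /
              (2 * (1 + 2 * Δ / 3))) *
          ((((7 + 2 * Δ + Real.sqrt (25 + 4 * Δ + 4 * Δ ^ 2)) / 3) ^ n -
              ((7 + 2 * Δ - Real.sqrt (25 + 4 * Δ + 4 * Δ ^ 2)) / 3) ^ n) /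
            (((7 + 2 * Δ + Real.sqrt (25 + 4 * Δ + 4 * Δ ^ 2)) / 3) -
              ((7 + 2 * Δ - Real.sqrt (25 + 4 * Δ + 4 * Δ ^ 2)) / 3))) :=
  Bseq_closed_form_general Δ n
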